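/- arXiv:2003.11792 — 5 statements merged into one kernel-verified Lean document; each statement's English description precedes it below -/
import Mathlib

section
/- Let G = (V, E, m) be a Klaus-sparse weighted graph, let k ∈ J and λ ∈ ℝ. Assume there exist finitely supported φ_n : V_{∞,k} → ℂ with ‖φ_n‖_{ℓ²_{m_{∞,k}}(V_{∞,k})} = 1 and ‖Δ_{G_{∞,k}} φ_n − λ φ_n‖ → 0 as n → ∞. Then there exist finitely supported ψ_n : V → ℂ with ‖ψ_n‖_{ℓ²_m(V)} = 1, with pairwise disjoint supports (in particular, for every finite K ⊂ V the support of ψ_n is disjoint from K for all sufficiently large n), and with ‖Δ_G ψ_n − λ ψ_n‖_{ℓ²_m(V)} → 0 as n → ∞. -/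
open scoped BigOperators

/-- A weighted graph: symmetric nonnegative edge weights with no loops,
locally finite, with a positive vertex weight. -/
structure WeightedGraph (V : Type) where
  E : V → V → ℝ
  m : V → ℝ
  E_symm : ∀ x y, E x y = E y x
  E_nonneg : ∀ x y, 0 ≤ E x y
  E_diag : ∀ x, E x x = 0
  locFin : ∀ x, {y | E x y ≠ 0}.Finite
  m_pos : ∀ x, 0 < m x

namespace WeightedGraph

variable {V : Type}

/-- The underlying simple graph. -/
def toSimpleGraph (G : WeightedGraph V) : SimpleGraph V where
  Adj x y := x ≠ y ∧ G.E x y ≠ 0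
  symm := by
    constructor
    intro x y h
    exact ⟨h.1.symm, by rw [G.E_symm]; exact h.2⟩
  loopless := by constructor; intro x h; exact h.1 rfl

/-- The weighted degree. -/
noncomputable def deg (G : WeightedGraph V) (x : V) : ℝ :=
  (G.m x)⁻¹ * ∑ᶠ y, G.E x y

/-- The combinatorial ball for the unweighted graph distance. -/
def ball (G : WeightedGraph V) (x : V) (r : ℕ) : Set V :=
  {y | G.toSimpleGraph.dist x y ≤ r}

lemma center_mem_ball (G : WeightedGraph V) (x : V) (r : ℕ) : x ∈ G.ball x r := by
  simp [ball, SimpleGraph.dist_self]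

/-- The induced weighted graph on a subset of the vertices. -/
def induce (G : WeightedGraph V) (X : Set V) : WeightedGraph X where
  E a b := G.E a b
  m a := G.m a
  E_symm a b := G.E_symm a b
  E_nonneg a b := G.E_nonneg a b
  E_diag a := G.E_diag a
  locFin a := Set.Finite.preimage (Subtype.coe_injective.injOn) (G.locFin a)
  m_pos a := G.m_pos a

/-- The graph Laplacian, acting on arbitrary functions (pointwise well defined by
local finiteness). -/
noncomputable def lapl (G : WeightedGraph V) (f : V → ℂ) : V → ℂ := fun x =>
  (G.m x : ℂ)⁻¹ * ∑ᶠ y, (G.E x y : ℂ) * (f x - f y)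

/-- The square of the `ℓ²_m` norm. -/
noncomputable def normSq (G : WeightedGraph V) (f : V → ℂ) : ℝ :=
  ∑ᶠ x, G.m x * ‖f x‖ ^ 2

/-- The `ℓ²_m` norm. -/
noncomputable def wnorm (G : WeightedGraph V) (f : V → ℂ) : ℝ :=
  Real.sqrt (G.normSq f)

/-- The quadratic form of the Laplacian. -/
noncomputable def quadForm (G : WeightedGraph V) (f : V → ℂ) : ℝ :=
  (1 / 2) * ∑ᶠ x, ∑ᶠ y, G.E x y * ‖f x - f y‖ ^ 2

end WeightedGraph

/-- An embedding of weighted graphs (injective, preserving edge weights and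
vertex weights). -/
structure GraphEmbedding {V₁ V₂ : Type} (G₁ : WeightedGraph V₁) (G₂ : WeightedGraph V₂) where
  toFun : V₁ → V₂
  inj : Function.Injective toFun
  mapE : ∀ x y, G₁.E x y = G₂.E (toFun x) (toFun y)
  mapm : ∀ x, G₁.m x = G₂.m (toFun x)

/-- A pointed embedding of pointed weighted graphs. -/
structure PointedEmbedding {V₁ V₂ : Type} (G₁ : WeightedGraph V₁) (x₁ : V₁)
    (G₂ : WeightedGraph V₂) (x₂ : V₂) extends GraphEmbedding G₁ G₂ where
  base : toFun x₁ = x₂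

/-- Condition (c) of the definition of a Klaus-sparse graph: the connected components of
the graph induced on `S` carry base points and a total order along which they embed into
each other, and they all embed into the medium graph `(GM, xM)`. -/
def CompCondition {V VM : Type} (G : WeightedGraph V) (GM : WeightedGraph VM) (xM : VM)
    (S : Set V) : Prop :=
  ∃ (pt : ∀ c : ((G.induce S).toSimpleGraph).ConnectedComponent, {v : S // v ∈ c.supp})
    (ord : ((G.induce S).toSimpleGraph).ConnectedComponent →
      ((G.induce S).toSimpleGraph).ConnectedComponent → Prop),
    (∀ c c', ord c c' ∨ ord c' c) ∧
    (∀ c c', ord c c' →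
      Nonempty (PointedEmbedding ((G.induce S).induce c.supp) ⟨(pt c).1, (pt c).2⟩
        ((G.induce S).induce c'.supp) ⟨(pt c').1, (pt c').2⟩)) ∧
    (∀ c, Nonempty (PointedEmbedding ((G.induce S).induce c.supp) ⟨(pt c).1, (pt c).2⟩ GM xM))

/-- The definition of a Klaus-sparse graph (Definition 2.1 of the paper), bundled as the
data of the patterns, the localisations at infinity, the medium graph, and the
compatibility conditions (a)-(e). -/
structure KlausSparse {V : Type} (G : WeightedGraph V) where
  /-- The graph itself is connected. -/
  conn : G.toSimpleGraph.Connected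
  /-- The index set of the patterns. -/
  J : Type
  countJ : Countable J
  nonemptyJ : Nonempty J
  /-- The centers `x_{i,k}`. -/
  center : ℕ × J → V
  /-- The interior radii `r^int_{i,k}`. -/
  rint : ℕ × J → ℕ
  /-- The exterior radii `r^ext_{i,k}`. -/
  rext : ℕ × J → ℕ
  rint_pos : ∀ p, 0 < rint p
  rint_lt_rext : ∀ p, rint p < rext p
  /-- (a): `r^int → ∞` along the cofinite filter. -/
  rint_tendsto : Filter.Tendsto rint Filter.cofinite Filter.atTop
  /-- (a): `r^ext - r^int → ∞` along the cofinite filter. -/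
  gap_tendsto : Filter.Tendsto (fun p => rext p - rint p) Filter.cofinite Filter.atTop
  /-- The vertex sets of the localisations at infinity. -/
  Vinf : J → Type
  /-- The localisations at infinity. -/
  Ginf : ∀ k, WeightedGraph (Vinf k)
  /-- Their base points. -/
  xinf : ∀ k, Vinf k
  Ginf_conn : ∀ k, (Ginf k).toSimpleGraph.Connected
  /-- The vertex set of the medium graph. -/
  VM : Type
  /-- The medium graph. -/
  GM : WeightedGraph VM
  /-- Its base point. -/
  xM : VM
  /-- The medium graph has uniformly bounded degree. -/
  degM_bdd : ∃ D : ℝ, ∀ y, GM.deg y ≤ D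
  /-- (b), first half: each exterior ball embeds in the corresponding localisation
  at infinity. -/
  emb_ext : ∀ p : ℕ × J,
    Nonempty (PointedEmbedding (G.induce (G.ball (center p) (rext p)))
      ⟨center p, G.center_mem_ball _ _⟩ (Ginf p.2) (xinf p.2))
  /-- (b), second half: each ball of the localisation at infinity embeds back in some
  interior ball. -/
  emb_int : ∀ (r : ℕ) (k : J), ∃ i : ℕ,
    Nonempty (PointedEmbedding ((Ginf k).induce ((Ginf k).ball (xinf k) r))
      ⟨xinf k, (Ginf k).center_mem_ball _ _⟩
      (G.induce (G.ball (center (i, k)) (rint (i, k) - 1)))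
      ⟨center (i, k), G.center_mem_ball _ _⟩)
  /-- (c): the connected components of the complement of the interior balls. -/
  comp_cond : CompCondition G GM xM ((⋃ p : ℕ × J, G.ball (center p) (rint p - 1))ᶜ)
  /-- (d): the exterior balls are pairwise disjoint. -/
  disj : ∀ p q : ℕ × J, p ≠ q →
    Disjoint (G.ball (center p) (rext p)) (G.ball (center q) (rext q))
  /-- (e): arbitrarily large balls of the medium graph embed in annuli of the patterns. -/
  emb_med : ∀ r : ℕ, ∃ p : ℕ × J,
    Nonempty (GraphEmbedding (GM.induce (GM.ball xM r))
      (G.induce (G.ball (center p) (rext p - 1) \ G.ball (center p) (rint p + 1))))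

/-!
A localisation at infinity `G_{∞,k}` is, ball by ball, an exact copy of the neighbourhood of
some pattern of `G`. Given a finitely supported approximate eigenfunction on `G_{∞,k}`, take a
ball around its support, embed it into an interior ball of a pattern `(i, k)` and transplant the
function. The only danger is that `G` has edges leaving the copy; these are ruled out by embedding
the exterior ball of that pattern back into `G_{∞,k}`: the composite is an embedding of a finite
ball into `G_{∞,k}` fixing the centre, hence a bijection of that ball, so every neighbour in `G`
of the copy already lies in the copy. The transplanted function then has the same norm and the
same residual `‖Δψ - λψ‖`. Since balls of `G_{∞,k}` grow without bound, a large enough ball fits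
into none of finitely many given interior balls, so the patterns used for the successive
eigenfunctions can be taken distinct; disjointness of the exterior balls then makes the supports
pairwise disjoint.
-/

open Function Set Filter

theorem finsum_eq_finsum_comp_of_support_subset_range {M α β : Type*} [AddCommMonoid M]
    {u : α → β} (hu : Injective u) {F : β → M} (h : support F ⊆ range u) :
    ∑ᶠ y, F y = ∑ᶠ a, F (u a) := by
  rw [← finsum_mem_range hu, finsum_mem_def, indicator_eq_self.2 h]

theorem Pairwise.eventually_disjoint_of_finite {ι α : Type*} {s : ι → Set α}
    (h : Pairwise (Disjoint on s)) {K : Set α} (hK : K.Finite) :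
    ∀ᶠ n in cofinite, Disjoint (s n) K := by
  rw [eventually_cofinite]
  refine (hK.biUnion fun x _ => Set.Subsingleton.finite (s := {n | x ∈ s n}) ?_).subset ?_
  · intro n hn n' hn'
    by_contra hne
    exact disjoint_left.1 (h hne) hn hn'
  · intro n hn
    obtain ⟨x, hxs, hxK⟩ := not_disjoint_iff.1 hn
    exact mem_biUnion hxK hxs

namespace SimpleGraph

variable {V : Type*} {G : SimpleGraph V} {u v w : V}

lemma Adj.dist_le_succ (h : G.Adj v w) (u : V) : G.dist u w ≤ G.dist u v + 1 := by
  simpa [dist_eq_one_iff_adj.2 h] using h.reachable.dist_triangle_right u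

lemma Walk.dist_getVert_of_length_eq_dist (p : G.Walk u v) (hp : p.length = G.dist u v)
    {i : ℕ} (hi : i ≤ p.length) : G.dist u (p.getVert i) = i := by
  have htake := dist_le (p.take i)
  have hdrop := dist_le (p.drop i)
  have htri := (p.drop i).reachable.dist_triangle_right u
  rw [Walk.take_length] at htake
  rw [Walk.drop_length] at hdrop
  omega

end SimpleGraph

namespace WeightedGraph

variable {V : Type} (G : WeightedGraph V)

lemma adj_of_E_ne {x y : V} (h : G.E x y ≠ 0) : G.toSimpleGraph.Adj x y :=
  ⟨by rintro rfl; exact h (G.E_diag x), h⟩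

lemma mem_ball_succ_of_E_ne {x y z : V} {r : ℕ} (hy : y ∈ G.ball x r) (h : G.E y z ≠ 0) :
    z ∈ G.ball x (r + 1) :=
  ((G.adj_of_E_ne h).dist_le_succ x).trans (Nat.add_le_add_right hy 1)

lemma ball_mono (x : V) {r r' : ℕ} (h : r ≤ r') : G.ball x r ⊆ G.ball x r' :=
  fun _ hy => le_trans hy h

variable {G}

lemma finite_ball (hc : G.toSimpleGraph.Connected) (x : V) (r : ℕ) : (G.ball x r).Finite := by
  induction r with
  | zero =>
    refine (finite_singleton x).subset fun y hy => ?_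
    exact (hc.dist_eq_zero_iff.1 (Nat.le_zero.1 hy)).symm
  | succ r ih =>
    refine (ih.union (ih.biUnion fun z _ => G.locFin z)).subset fun y hy => ?_
    by_cases hyr : G.toSimpleGraph.dist x y ≤ r
    · exact Or.inl hyr
    obtain ⟨p, hp⟩ := hc.exists_walk_length_eq_dist x y
    have hlen : p.length = r + 1 := by simp only [ball, mem_ofPred_eq] at hy; omega
    have hz : p.getVert r ∈ G.ball x r :=
      (p.dist_getVert_of_length_eq_dist hp (by omega)).le
    have hadj := p.adj_getVert_succ (i := r) (by omega)
    rw [← hlen, SimpleGraph.Walk.getVert_length] at hadj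
    exact Or.inr (mem_biUnion hz hadj.2)

lemma exists_dist_eq [Infinite V] (hc : G.toSimpleGraph.Connected) (x : V) (r : ℕ) :
    ∃ y, G.toSimpleGraph.dist x y = r := by
  obtain ⟨y, hy⟩ := (finite_ball hc x r).infinite_compl.nonempty
  obtain ⟨p, hp⟩ := hc.exists_walk_length_eq_dist x y
  simp only [ball, mem_compl_iff, mem_ofPred_eq, not_le] at hy
  exact ⟨p.getVert r, p.dist_getVert_of_length_eq_dist hp (by omega)⟩

lemma le_card_ball [Infinite V] (hc : G.toSimpleGraph.Connected) (x : V) (r : ℕ) :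
    r + 1 ≤ Nat.card (G.ball x r) := by
  have := (finite_ball hc x r).to_subtype
  choose y hy using fun d : Fin (r + 1) => exists_dist_eq hc x d
  have hinj : Injective fun d => (⟨y d, (hy d).trans_le (Nat.lt_succ_iff.1 d.2)⟩ : G.ball x r) :=
    fun d d' h => Fin.ext <| (hy d).symm.trans <|
      (congrArg (fun z => G.toSimpleGraph.dist x z.1) h).trans (hy d')
  simpa using Nat.card_le_card_of_injective _ hinj

/-- Geodesics from the centre stay in the ball. -/
lemma exists_walk_induce_ball (hc : G.toSimpleGraph.Connected) {x : V} {r : ℕ}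
    (a : G.ball x r) :
    ∃ p : (G.induce (G.ball x r)).toSimpleGraph.Walk ⟨x, G.center_mem_ball x r⟩ a,
      p.length = G.toSimpleGraph.dist x a := by
  classical
  obtain ⟨q, hq⟩ := hc.exists_walk_length_eq_dist x a
  have hsupp : ∀ u ∈ q.support, u ∈ G.ball x r := fun u hu =>
    (SimpleGraph.dist_le (q.takeUntil u hu)).trans
      ((q.length_takeUntil_le_length hu).trans (hq.trans_le a.2))
  have hle : G.toSimpleGraph.induce (G.ball x r) ≤ (G.induce (G.ball x r)).toSimpleGraph :=
    fun a b h => ⟨fun hab => h.1 (congrArg Subtype.val hab), h.2⟩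
  refine ⟨(q.induce _ hsupp).mapLe hle, ?_⟩
  rw [SimpleGraph.Walk.length_mapLe,
    ← SimpleGraph.Walk.length_map (SimpleGraph.Embedding.induce _).toHom,
    SimpleGraph.Walk.map_induce]
  exact hq

lemma lapl_eq_zero_of_forall_E_ne {f : V → ℂ} {x : V} (h0 : f x = 0)
    (h : ∀ y, G.E x y ≠ 0 → f y = 0) : G.lapl f x = 0 := by
  have hz : (fun y => (G.E x y : ℂ) * (f x - f y)) = fun _ => 0 := by
    funext y
    by_cases hE : G.E x y = 0
    · simp [hE]
    · simp [h y hE, h0]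
  simp only [lapl, hz, finsum_zero, mul_zero]

lemma lapl_eq_zero_of_notMem {f : V → ℂ} {B : Set V} (hf : support f ⊆ B)
    (hnb : ∀ w ∈ support f, ∀ w', G.E w w' ≠ 0 → w' ∈ B) {w : V} (hw : w ∉ B) :
    G.lapl f w = 0 :=
  lapl_eq_zero_of_forall_E_ne (notMem_support.1 fun h => hw (hf h)) fun w' hE => by
    by_contra hfw'
    exact hw (hnb w' hfw' w (by rwa [G.E_symm]))

end WeightedGraph

namespace GraphEmbedding

variable {V₁ V₂ V₃ : Type} {G₁ : WeightedGraph V₁} {G₂ : WeightedGraph V₂}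
  {G₃ : WeightedGraph V₃}

def comp (g : GraphEmbedding G₂ G₃) (f : GraphEmbedding G₁ G₂) : GraphEmbedding G₁ G₃ where
  toFun := g.toFun ∘ f.toFun
  inj := g.inj.comp f.inj
  mapE x y := (f.mapE x y).trans (g.mapE _ _)
  mapm x := (f.mapm x).trans (g.mapm _)

def induce (G : WeightedGraph V₁) (X : Set V₁) : GraphEmbedding (G.induce X) G where
  toFun := Subtype.val
  inj := Subtype.val_injective
  mapE _ _ := rfl
  mapm _ := rfl

def induceOfSubset (G : WeightedGraph V₁) {X Y : Set V₁} (h : X ⊆ Y) :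
    GraphEmbedding (G.induce X) (G.induce Y) where
  toFun := Set.inclusion h
  inj := Set.inclusion_injective h
  mapE _ _ := rfl
  mapm _ := rfl

def toHom (f : GraphEmbedding G₁ G₂) : G₁.toSimpleGraph →g G₂.toSimpleGraph where
  toFun := f.toFun
  map_rel' h := ⟨f.inj.ne h.1, by rw [← f.mapE]; exact h.2⟩

end GraphEmbedding

namespace PointedEmbedding

variable {V₁ V₂ V₃ : Type} {G₁ : WeightedGraph V₁} {G₂ : WeightedGraph V₂}
  {G₃ : WeightedGraph V₃} {x₁ : V₁} {x₂ : V₂} {x₃ : V₃}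

def comp (g : PointedEmbedding G₂ x₂ G₃ x₃) (f : PointedEmbedding G₁ x₁ G₂ x₂) :
    PointedEmbedding G₁ x₁ G₃ x₃ :=
  { g.toGraphEmbedding.comp f.toGraphEmbedding with
    base := by simp [GraphEmbedding.comp, f.base, g.base] }

variable {W : Type} {H : WeightedGraph W} {x : W} {r : ℕ}

lemma dist_map_le (hc : H.toSimpleGraph.Connected)
    (κ : PointedEmbedding (H.induce (H.ball x r)) ⟨x, H.center_mem_ball x r⟩ H x)
    (a : H.ball x r) : H.toSimpleGraph.dist x (κ.toFun a) ≤ H.toSimpleGraph.dist x a := by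
  obtain ⟨p, hp⟩ := WeightedGraph.exists_walk_induce_ball hc a
  have h : H.toSimpleGraph.dist (κ.toFun ⟨x, _⟩) (κ.toFun a) ≤ p.length :=
    (SimpleGraph.dist_le (p.map κ.toGraphEmbedding.toHom)).trans_eq (p.length_map _)
  rwa [κ.base, hp] at h

/-- An embedding of a finite ball into the ambient graph that fixes the centre maps the ball
injectively into itself, hence onto itself. -/
lemma ball_subset_range (hc : H.toSimpleGraph.Connected)
    (κ : PointedEmbedding (H.induce (H.ball x r)) ⟨x, H.center_mem_ball x r⟩ H x) :
    H.ball x r ⊆ range κ.toFun := by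
  have := (WeightedGraph.finite_ball hc x r).to_subtype
  let κ' : H.ball x r → H.ball x r := fun a => ⟨κ.toFun a, (κ.dist_map_le hc a).trans a.2⟩
  have hsurj : Surjective κ' :=
    Finite.injective_iff_surjective.1 fun a b h => κ.inj (congrArg Subtype.val h)
  intro w hw
  obtain ⟨a, ha⟩ := hsurj ⟨w, hw⟩
  exact ⟨a, congrArg Subtype.val ha⟩

end PointedEmbedding

namespace GraphEmbedding

variable {V W : Type} {G : WeightedGraph V} {H : WeightedGraph W} {B : Set W}
  (ι : GraphEmbedding (H.induce B) G) {f : W → ℂ}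

lemma normSq_eq {g : V → ℂ} (hf : ∀ w ∉ B, f w = 0) (hg : ∀ y ∉ range ι.toFun, g y = 0)
    (hfg : ∀ a, g (ι.toFun a) = f a) : G.normSq g = H.normSq f := by
  have hsuppG : support (fun y => G.m y * ‖g y‖ ^ 2) ⊆ range ι.toFun := fun y hy => by
    by_contra hyr
    exact hy (by simp [hg y hyr])
  have hsuppH : support (fun w => H.m w * ‖f w‖ ^ 2) ⊆ range (Subtype.val : B → W) :=
    fun w hw => by
      rw [Subtype.range_coe]
      by_contra hwB
      exact hw (by simp [hf w hwB])
  rw [WeightedGraph.normSq, WeightedGraph.normSq,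
    finsum_eq_finsum_comp_of_support_subset_range ι.inj hsuppG,
    finsum_eq_finsum_comp_of_support_subset_range Subtype.val_injective hsuppH]
  exact finsum_congr fun a => by rw [← ι.mapm a, hfg a]; rfl

noncomputable def transport (f : W → ℂ) : V → ℂ :=
  extend ι.toFun (fun a => f a) 0

lemma transport_apply (a : B) : ι.transport f (ι.toFun a) = f a :=
  ι.inj.extend_apply _ _ _

lemma transport_eq_zero {y : V} (hy : y ∉ range ι.toFun) : ι.transport f y = 0 :=
  extend_apply' _ _ _ hy

lemma support_transport_subset :
    support (ι.transport f) ⊆ ι.toFun '' (Subtype.val ⁻¹' support f) := by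
  intro y hy
  by_cases hyr : y ∈ range ι.toFun
  · obtain ⟨a, rfl⟩ := hyr
    exact ⟨a, by simpa [transport_apply] using hy, rfl⟩
  · exact absurd (ι.transport_eq_zero hyr) hy

lemma finite_support_transport (hf : (support f).Finite) : (support (ι.transport f)).Finite :=
  ((hf.preimage Subtype.val_injective.injOn).image _).subset ι.support_transport_subset

lemma normSq_transport (hf : support f ⊆ B) : G.normSq (ι.transport f) = H.normSq f :=
  ι.normSq_eq (fun _ hw => notMem_support.1 fun h => hw (hf h)) (fun _ => ι.transport_eq_zero)
    ι.transport_apply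

lemma lapl_transport_apply (hf : support f ⊆ B)
    (hnbB : ∀ w ∈ support f, ∀ w', H.E w w' ≠ 0 → w' ∈ B)
    (hnbG : ∀ a : B, f a ≠ 0 → ∀ y, G.E (ι.toFun a) y ≠ 0 → y ∈ range ι.toFun) (a : B) :
    G.lapl (ι.transport f) (ι.toFun a) = H.lapl f a := by
  have hsuppG : support (fun y => (G.E (ι.toFun a) y : ℂ) *
      (ι.transport f (ι.toFun a) - ι.transport f y)) ⊆ range ι.toFun := by
    intro y hy
    by_contra hyr
    have hE : G.E (ι.toFun a) y ≠ 0 := fun h => hy (by simp [h])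
    have hfa : f a ≠ 0 := fun h => hy (by simp [ι.transport_apply, ι.transport_eq_zero hyr, h])
    exact hyr (hnbG a hfa y hE)
  have hsuppH : support (fun w => (H.E a w : ℂ) * (f a - f w)) ⊆ range (Subtype.val : B → W) := by
    rw [Subtype.range_coe]
    intro w hw
    by_contra hwB
    have hE : H.E a w ≠ 0 := fun h => hw (by simp [h])
    have hfa : f a ≠ 0 := fun h => hw (by simp [h, notMem_support.1 fun h' => hwB (hf h')])
    exact hwB (hnbB a hfa w hE)
  simp only [WeightedGraph.lapl]
  rw [← ι.mapm a, finsum_eq_finsum_comp_of_support_subset_range ι.inj hsuppG,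
    finsum_eq_finsum_comp_of_support_subset_range Subtype.val_injective hsuppH]
  congr 1
  refine finsum_congr fun b => ?_
  rw [← ι.mapE, ι.transport_apply, ι.transport_apply]
  rfl

lemma lapl_transport_eq_zero
    (hnbG : ∀ a : B, f a ≠ 0 → ∀ y, G.E (ι.toFun a) y ≠ 0 → y ∈ range ι.toFun) {y : V}
    (hy : y ∉ range ι.toFun) : G.lapl (ι.transport f) y = 0 :=
  G.lapl_eq_zero_of_forall_E_ne (ι.transport_eq_zero hy) fun y' hE => by
    by_contra hψ
    obtain ⟨a, ha, rfl⟩ := ι.support_transport_subset hψ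
    exact hy (hnbG a ha y (by rwa [G.E_symm]))

lemma normSq_lapl_transport (c : ℂ) (hf : support f ⊆ B)
    (hnbB : ∀ w ∈ support f, ∀ w', H.E w w' ≠ 0 → w' ∈ B)
    (hnbG : ∀ a : B, f a ≠ 0 → ∀ y, G.E (ι.toFun a) y ≠ 0 → y ∈ range ι.toFun) :
    G.normSq (fun y => G.lapl (ι.transport f) y - c * ι.transport f y) =
      H.normSq (fun w => H.lapl f w - c * f w) :=
  ι.normSq_eq
    (fun w hw => by
      rw [H.lapl_eq_zero_of_notMem hf hnbB hw, notMem_support.1 fun h => hw (hf h)]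
      ring)
    (fun y hy => by rw [ι.lapl_transport_eq_zero hnbG hy, ι.transport_eq_zero hy]; ring)
    (fun a => by rw [ι.lapl_transport_apply hf hnbB hnbG a, ι.transport_apply])

end GraphEmbedding

namespace KlausSparse

variable {V : Type} {G : WeightedGraph V}

protected lemma infinite (KS : KlausSparse G) : Infinite V := by
  obtain ⟨k⟩ := KS.nonemptyJ
  refine Infinite.of_injective (fun i : ℕ => KS.center (i, k)) fun i i' h => ?_
  by_contra hne
  refine disjoint_left.1 (KS.disj (i, k) (i', k) (by simpa using hne)) (G.center_mem_ball _ _) ?_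
  rw [show KS.center (i, k) = KS.center (i', k) from h]
  exact G.center_mem_ball _ _

variable (KS : KlausSparse G)

lemma tendsto_rint (k : KS.J) : Tendsto (fun i => KS.rint (i, k)) atTop atTop := by
  have := KS.rint_tendsto.comp
    (Injective.tendsto_cofinite (f := fun i : ℕ => (i, k)) fun _ _ h => by simpa using h)
  rwa [Nat.cofinite_eq_atTop] at this

lemma infinite_Vinf (k : KS.J) : Infinite (KS.Vinf k) := by
  have := KS.infinite
  by_contra hfin
  have := not_infinite_iff_finite.1 hfin
  obtain ⟨i, hi⟩ := ((KS.tendsto_rint k).eventually_ge_atTop (Nat.card (KS.Vinf k))).exists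
  obtain ⟨j⟩ := KS.emb_ext (i, k)
  have hj : Nat.card (G.ball (KS.center (i, k)) (KS.rext (i, k))) ≤ Nat.card (KS.Vinf k) :=
    Nat.card_le_card_of_injective _ j.inj
  have := WeightedGraph.le_card_ball KS.conn (KS.center (i, k)) (KS.rext (i, k))
  have := KS.rint_lt_rext (i, k)
  omega

lemma le_card_interiorBall {k : KS.J} {r i : ℕ}
    (ι : GraphEmbedding ((KS.Ginf k).induce ((KS.Ginf k).ball (KS.xinf k) r))
      (G.induce (G.ball (KS.center (i, k)) (KS.rint (i, k) - 1)))) :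
    r + 1 ≤ Nat.card (G.ball (KS.center (i, k)) (KS.rint (i, k) - 1)) := by
  have := KS.infinite_Vinf k
  have := (WeightedGraph.finite_ball KS.conn (KS.center (i, k)) (KS.rint (i, k) - 1)).to_subtype
  exact ((KS.Ginf k).le_card_ball (KS.Ginf_conn k) _ r).trans
    (Nat.card_le_card_of_injective _ ι.inj)

lemma mem_range_of_E_ne {k : KS.J} {r i : ℕ}
    (ι : PointedEmbedding ((KS.Ginf k).induce ((KS.Ginf k).ball (KS.xinf k) (r + 1)))
      ⟨KS.xinf k, (KS.Ginf k).center_mem_ball _ _⟩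
      (G.induce (G.ball (KS.center (i, k)) (KS.rint (i, k) - 1)))
      ⟨KS.center (i, k), G.center_mem_ball _ _⟩)
    {b : (KS.Ginf k).ball (KS.xinf k) (r + 1)} (hb : b.1 ∈ (KS.Ginf k).ball (KS.xinf k) r)
    {y : V} (hy : G.E (ι.toFun b) y ≠ 0) : ∃ a, (ι.toFun a : V) = y := by
  obtain ⟨j⟩ := KS.emb_ext (i, k)
  have hri := KS.rint_lt_rext (i, k)
  have hsub := G.ball_mono (KS.center (i, k)) (show KS.rint (i, k) - 1 ≤ KS.rext (i, k) by omega)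
  let κ := j.comp (PointedEmbedding.comp
    { GraphEmbedding.induceOfSubset G hsub with base := rfl } ι)
  have hyext : y ∈ G.ball (KS.center (i, k)) (KS.rext (i, k)) :=
    G.ball_mono _ (by omega) (G.mem_ball_succ_of_E_ne (ι.toFun b).2 hy)
  have hκb : κ.toFun b ∈ (KS.Ginf k).ball (KS.xinf k) r :=
    (κ.dist_map_le (KS.Ginf_conn k) b).trans hb
  have hE : (KS.Ginf k).E (κ.toFun b) (j.toFun ⟨y, hyext⟩) = G.E (ι.toFun b) y :=
    (j.mapE _ _).symm
  have hjy : j.toFun ⟨y, hyext⟩ ∈ (KS.Ginf k).ball (KS.xinf k) (r + 1) :=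
    (KS.Ginf k).mem_ball_succ_of_E_ne hκb (hE ▸ hy)
  -- `κ` permutes the ball, so `j y` is the image under `κ = j ∘ ι` of some `a`
  obtain ⟨a, ha⟩ := κ.ball_subset_range (KS.Ginf_conn k) hjy
  exact ⟨a, congrArg Subtype.val (j.inj ha)⟩

theorem exists_transport (k : KS.J) {f : KS.Vinf k → ℂ} (hf : (support f).Finite) (N : ℕ) :
    ∃ i ≥ N, ∃ ψ : V → ℂ, (support ψ).Finite ∧
      support ψ ⊆ G.ball (KS.center (i, k)) (KS.rext (i, k)) ∧
      G.normSq ψ = (KS.Ginf k).normSq f ∧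
      ∀ c : ℂ, G.normSq (fun x => G.lapl ψ x - c * ψ x) =
        (KS.Ginf k).normSq (fun w => (KS.Ginf k).lapl f w - c * f w) := by
  set H := KS.Ginf k
  obtain ⟨R, hR⟩ : ∃ R, support f ⊆ H.ball (KS.xinf k) R :=
    ⟨hf.toFinset.sup (H.toSimpleGraph.dist (KS.xinf k)),
      fun w hw => Finset.le_sup (f := H.toSimpleGraph.dist (KS.xinf k)) (hf.mem_toFinset.2 hw)⟩
  set s := max R ((Finset.range N).sup fun i =>
    Nat.card (G.ball (KS.center (i, k)) (KS.rint (i, k) - 1)))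
  obtain ⟨i, ⟨ι⟩⟩ := KS.emb_int (s + 1) k
  have hiN : N ≤ i := by
    by_contra! hi
    have := KS.le_card_interiorBall ι.toGraphEmbedding
    have := (Finset.le_sup (f := fun i =>
      Nat.card (G.ball (KS.center (i, k)) (KS.rint (i, k) - 1))) (Finset.mem_range.2 hi)).trans
      (le_max_right R _)
    omega
  have hfs : support f ⊆ H.ball (KS.xinf k) s := hR.trans (H.ball_mono _ (le_max_left _ _))
  let e := (GraphEmbedding.induce G _).comp ι.toGraphEmbedding
  have hfB : support f ⊆ H.ball (KS.xinf k) (s + 1) := hfs.trans (H.ball_mono _ (by omega))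
  have hnbB : ∀ w ∈ support f, ∀ w', H.E w w' ≠ 0 → w' ∈ H.ball (KS.xinf k) (s + 1) :=
    fun w hw _ hE => H.mem_ball_succ_of_E_ne (hfs hw) hE
  have hnbG : ∀ a : H.ball (KS.xinf k) (s + 1), f a ≠ 0 →
      ∀ y, G.E (e.toFun a) y ≠ 0 → y ∈ range e.toFun :=
    fun a ha _ hE => KS.mem_range_of_E_ne ι (hfs ha) hE
  refine ⟨i, hiN, e.transport f, e.finite_support_transport hf, ?_, e.normSq_transport hfB,
    fun c => e.normSq_lapl_transport c hfB hnbB hnbG⟩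
  intro y hy
  obtain ⟨a, -, rfl⟩ := e.support_transport_subset hy
  exact G.ball_mono _ (by have := KS.rint_lt_rext (i, k); omega) (ι.toFun a).2

end KlausSparse

theorem spectrum_localisation_subset_essSpectrum_general
    {V : Type} (G : WeightedGraph V) (KS : KlausSparse G)
    (k : KS.J) (lam : ℝ) (φ : ℕ → KS.Vinf k → ℂ)
    (hsupp : ∀ n, (Function.support (φ n)).Finite)
    (hnorm : ∀ n, (KS.Ginf k).wnorm (φ n) = 1)
    (hconv : Filter.Tendsto
      (fun n => (KS.Ginf k).wnorm (fun x => (KS.Ginf k).lapl (φ n) x - (lam : ℂ) * φ n x))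
      Filter.atTop (nhds 0)) :
    ∃ ψ : ℕ → V → ℂ,
      (∀ n, (Function.support (ψ n)).Finite) ∧
      (∀ n, G.wnorm (ψ n) = 1) ∧
      (Pairwise fun n n' => Disjoint (Function.support (ψ n)) (Function.support (ψ n'))) ∧
      (∀ K : Set V, K.Finite → ∀ᶠ n in Filter.atTop, Disjoint (Function.support (ψ n)) K) ∧
      Filter.Tendsto (fun n => G.wnorm (fun x => G.lapl (ψ n) x - (lam : ℂ) * ψ n x))
        Filter.atTop (nhds 0) := by
  obtain ⟨idx, hidx, hcopy⟩ := extraction_forall_of_frequently fun n =>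
    frequently_atTop.2 (KS.exists_transport k (hsupp n))
  choose ψ hfin hball hnormSq hres using hcopy
  have hdisj : Pairwise (Disjoint on fun n => support (ψ n)) := fun n n' hne =>
    (KS.disj _ _ (by simpa using hidx.injective.ne hne)).mono (hball n) (hball n')
  refine ⟨ψ, hfin, fun n => ?_, hdisj, fun K hK => ?_, ?_⟩
  · rw [WeightedGraph.wnorm, hnormSq, ← WeightedGraph.wnorm, hnorm]
  · rw [← Nat.cofinite_eq_atTop]
    exact hdisj.eventually_disjoint_of_finite hK
  · simpa only [WeightedGraph.wnorm, hres] using hconv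

/-- If `lam` admits a normalized sequence of finitely supported approximate
eigenfunctions for the Laplacian of a localisation at infinity `G_{∞,k}` of a
Klaus-sparse graph `G`, then `lam` admits a normalized sequence of finitely supported
approximate eigenfunctions for `Δ_G` with pairwise disjoint supports (in particular the
supports eventually leave every finite set), i.e. `σ(Δ_{G_{∞,k}}) ⊆ σ_ess(Δ_G)`. -/
theorem spectrum_localisation_subset_essSpectrum
    {V : Type} [Countable V] (G : WeightedGraph V) (KS : KlausSparse G)
    (k : KS.J) (lam : ℝ) (φ : ℕ → KS.Vinf k → ℂ)
    (hsupp : ∀ n, (Function.support (φ n)).Finite)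
    (hnorm : ∀ n, (KS.Ginf k).wnorm (φ n) = 1)
    (hconv : Filter.Tendsto
      (fun n => (KS.Ginf k).wnorm (fun x => (KS.Ginf k).lapl (φ n) x - (lam : ℂ) * φ n x))
      Filter.atTop (nhds 0)) :
    ∃ ψ : ℕ → V → ℂ,
      (∀ n, (Function.support (ψ n)).Finite) ∧
      (∀ n, G.wnorm (ψ n) = 1) ∧
      (Pairwise fun n n' => Disjoint (Function.support (ψ n)) (Function.support (ψ n'))) ∧
      (∀ K : Set V, K.Finite → ∀ᶠ n in Filter.atTop, Disjoint (Function.support (ψ n)) K) ∧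
      Filter.Tendsto (fun n => G.wnorm (fun x => G.lapl (ψ n) x - (lam : ℂ) * ψ n x))
        Filter.atTop (nhds 0) :=
  spectrum_localisation_subset_essSpectrum_general G KS k lam φ hsupp hnorm hconv
end

section
/- Let G = (V, E, m) be a weighted graph and χ : V → ℝ any function. For every finitely supported f : V → ℂ one has | Σ_{x,y∈V} E(x,y) (χ(x) − χ(y)) conj(f(x)) f(y) | ≤ Σ_{x∈V} m(x) G_χ(x) |f(x)|², where G_χ(x) := (1/m(x)) Σ_{y∈V} E(x,y) |χ(y) − χ(x)|. (The left-hand side equals |⟨f, [Δ_G, χ(·)] f⟩_{ℓ²_m(V)}|, where [Δ_G, χ(·)]f := Δ_G(χ f) − χ Δ_G f.) -/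
open scoped BigOperators

/-! The pairing is bounded termwise by `E(x,y) |χ(y) - χ(x)| |f(x)| |f(y)|`; AM-GM splits
`|f(x)| |f(y)|` into `(|f(x)|² + |f(y)|²) / 2`, and since the weight is symmetric in `x, y`
both halves contribute the same diagonal sum `Σ_x (Σ_y E(x,y) |χ(y) - χ(x)|) |f(x)|²`. -/

open Finset

section FiniteSums

variable {ι M : Type*}

theorem finsum_finsum_eq_sum_sum [AddCommMonoid M] (s : Finset ι) {F : ι → ι → M}
    (hleft : ∀ x ∉ s, ∀ y, F x y = 0) (hright : ∀ x, ∀ y ∉ s, F x y = 0) :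
    ∑ᶠ x, ∑ᶠ y, F x y = ∑ x ∈ s, ∑ y ∈ s, F x y := by
  have hinner : ∀ x, ∑ᶠ y, F x y = ∑ y ∈ s, F x y := fun x =>
    finsum_eq_sum_of_support_subset _ (Function.support_subset_iff'.mpr (hright x))
  simp_rw [hinner]
  exact finsum_eq_sum_of_support_subset _ <| Function.support_subset_iff'.mpr fun x hx =>
    sum_eq_zero fun y _ => hleft x hx y

theorem sum_le_finsum [AddCommMonoid M] [PartialOrder M] [IsOrderedAddMonoid M] {f : ι → M}
    (hf : (Function.support f).Finite) (hf₀ : 0 ≤ f) (s : Finset ι) :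
    ∑ x ∈ s, f x ≤ ∑ᶠ x, f x := by
  classical
  rw [finsum_eq_sum_of_support_subset f (s := s ∪ hf.toFinset) (by simp)]
  exact sum_le_sum_of_subset_of_nonneg subset_union_left fun x _ _ => hf₀ x

theorem sum_sum_mul_right_eq_sum_sum_mul_left [CommSemiring M] (s : Finset ι)
    {w : ι → ι → M} (hw : ∀ x y, w x y = w y x) (p : ι → M) :
    ∑ x ∈ s, ∑ y ∈ s, w x y * p y = ∑ x ∈ s, ∑ y ∈ s, w x y * p x := by
  rw [sum_comm]
  simp_rw [hw]

end FiniteSums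

section SchurTest

variable {ι 𝕜 : Type*} [RCLike 𝕜]

open scoped ComplexConjugate

theorem norm_mul_conj_mul_le (c a b : 𝕜) :
    ‖c * conj a * b‖ ≤ ‖c‖ * ((‖a‖ ^ 2 + ‖b‖ ^ 2) / 2) := by
  rw [norm_mul, norm_mul, RCLike.norm_conj, mul_assoc]
  gcongr
  linarith [two_mul_le_add_sq ‖a‖ ‖b‖]

theorem norm_sum_sum_mul_conj_le (s : Finset ι) {c : ι → ι → 𝕜} {w : ι → ι → ℝ}
    (hw : ∀ x y, w x y = w y x) (hc : ∀ x y, ‖c x y‖ ≤ w x y) (a : ι → 𝕜) :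
    ‖∑ x ∈ s, ∑ y ∈ s, c x y * conj (a x) * a y‖ ≤
      ∑ x ∈ s, (∑ y ∈ s, w x y) * ‖a x‖ ^ 2 := by
  calc ‖∑ x ∈ s, ∑ y ∈ s, c x y * conj (a x) * a y‖
      ≤ ∑ x ∈ s, ∑ y ∈ s, ‖c x y * conj (a x) * a y‖ :=
        (norm_sum_le _ _).trans (sum_le_sum fun x _ => norm_sum_le _ _)
    _ ≤ ∑ x ∈ s, ∑ y ∈ s, w x y * ((‖a x‖ ^ 2 + ‖a y‖ ^ 2) / 2) := by
        gcongr with x _ y _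
        exact (norm_mul_conj_mul_le _ _ _).trans (by gcongr; exact hc x y)
    _ = ∑ x ∈ s, ∑ y ∈ s, w x y * ‖a x‖ ^ 2 := by
        have hsymm := sum_sum_mul_right_eq_sum_sum_mul_left s hw fun y => ‖a y‖ ^ 2
        simp only [mul_add, mul_div_assoc', add_div, sum_add_distrib, ← sum_div, hsymm]
        ring
    _ = ∑ x ∈ s, (∑ y ∈ s, w x y) * ‖a x‖ ^ 2 := by simp only [sum_mul]

end SchurTest

theorem WeightedGraph.support_E_mul_finite {V : Type} (G : WeightedGraph V) (x : V)
    (g : V → ℝ) : (Function.support fun y => G.E x y * g y).Finite :=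
  (G.locFin x).subset fun _ hy => left_ne_zero_of_mul hy

theorem commutator_bound_general
    {V : Type} (G : WeightedGraph V)
    (χ : V → ℝ) (f : V → ℂ) (hf : (Function.support f).Finite) :
    ‖∑ᶠ x, ∑ᶠ y, (G.E x y : ℂ) * ((χ x : ℝ) - χ y : ℝ) *
        (starRingEnd ℂ) (f x) * f y‖ ≤
      ∑ᶠ x, G.m x * ((G.m x)⁻¹ * ∑ᶠ y, G.E x y * |χ y - χ x|) * ‖f x‖ ^ 2 := by
  set s := hf.toFinset
  have hfs : ∀ x ∉ s, f x = 0 := fun x hx => by simpa [s] using hx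
  rw [finsum_finsum_eq_sum_sum s (fun x hx y => by simp [hfs x hx]) fun x y hy => by
      simp [hfs y hy],
    finsum_eq_sum_of_support_subset _ (s := s) <| Function.support_subset_iff'.mpr fun x hx => by
      simp [hfs x hx]]
  have hweight : ∀ x y, ‖(G.E x y : ℂ) * ((χ x - χ y : ℝ) : ℂ)‖ ≤ G.E x y * |χ y - χ x| :=
    fun x y => by
      rw [norm_mul, Complex.norm_real, Complex.norm_real, Real.norm_of_nonneg (G.E_nonneg x y),
        Real.norm_eq_abs, abs_sub_comm]
  calc _ ≤ ∑ x ∈ s, (∑ y ∈ s, G.E x y * |χ y - χ x|) * ‖f x‖ ^ 2 :=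
        norm_sum_sum_mul_conj_le s (fun x y => by rw [G.E_symm, abs_sub_comm]) hweight f
    _ ≤ _ := by
        gcongr with x
        rw [mul_inv_cancel_left₀ (G.m_pos x).ne']
        exact sum_le_finsum (G.support_E_mul_finite x _)
          (fun y => mul_nonneg (G.E_nonneg x y) (abs_nonneg _)) s

/-- **Lemma 3.2, 1).** For every bounded (indeed, arbitrary) `χ : V → ℝ` and every
finitely supported `f : V → ℂ`, the commutator pairing satisfies
`|⟨f, [Δ_G, χ(·)] f⟩| = |Σ_{x,y} E(x,y)(χ(x)-χ(y)) conj(f(x)) f(y)| ≤ ⟨f, G_χ(·) f⟩`,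
where `G_χ(x) = (1/m(x)) Σ_y E(x,y)|χ(y)-χ(x)|`. -/
theorem commutator_bound
    {V : Type} [Countable V] (G : WeightedGraph V) (hconn : G.toSimpleGraph.Connected)
    (χ : V → ℝ) (f : V → ℂ) (hf : (Function.support f).Finite) :
    ‖∑ᶠ x, ∑ᶠ y, (G.E x y : ℂ) * ((χ x : ℝ) - χ y : ℝ) *
        (starRingEnd ℂ) (f x) * f y‖ ≤
      ∑ᶠ x, G.m x * ((G.m x)⁻¹ * ∑ᶠ y, G.E x y * |χ y - χ x|) * ‖f x‖ ^ 2 :=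
  commutator_bound_general G χ f hf
end

section
/- Let H be a complex inner product space, let p ≥ 1, let e_1, …, e_p ∈ H with ‖e_j‖ = 1 for all j, and let β_1, …, β_p ∈ ℂ. Then there exist θ_1, …, θ_p ∈ [0, 2π] such that ‖ Σ_{j=1}^p e^{iθ_j} β_j e_j ‖² ≥ Σ_{j=1}^p |β_j|². -/
/-!
Choose the phases one vector at a time. Given the partial sum `x` and the next vector `y`,
rotate `y` by a phase making `⟪x, y⟫` a nonnegative real; then the cross term in
`‖x + y‖² = ‖x‖² + 2 Re ⟪x, y⟫ + ‖y‖²` is nonnegative, so each step adds at least `‖y‖²`.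
-/

open Complex Real Set

lemma Complex.exists_mem_Icc_exp_mul_I_eq (x : ℝ) :
    ∃ t ∈ Icc 0 (2 * π), exp (t * I) = exp (x * I) := by
  refine ⟨toIcoMod two_pi_pos 0 x, Ico_subset_Icc_self ?_, ?_⟩
  · simpa using toIcoMod_mem_Ico two_pi_pos 0 x
  · rw [eq_sub_of_add_eq (toIcoMod_add_toIcoDiv_zsmul two_pi_pos 0 x), ofReal_sub,
      ofReal_zsmul, ofReal_mul, ofReal_ofNat, exp_mul_I_periodic.sub_zsmul_eq]

lemma Complex.exists_mem_Icc_exp_mul_I_mul_eq_norm (z : ℂ) :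
    ∃ t ∈ Icc 0 (2 * π), exp (t * I) * z = ‖z‖ := by
  obtain ⟨t, ht, hexp⟩ := exists_mem_Icc_exp_mul_I_eq (-arg z)
  refine ⟨t, ht, ?_⟩
  conv_lhs => rw [hexp, ← norm_mul_exp_arg_mul_I z, mul_left_comm, ← exp_add]
  simp

lemma exists_mem_Icc_norm_sq_add_le_norm_add_exp_smul_sq
    {H : Type*} [NormedAddCommGroup H] [InnerProductSpace ℂ H] (x y : H) :
    ∃ t ∈ Icc 0 (2 * π), ‖x‖ ^ 2 + ‖y‖ ^ 2 ≤ ‖x + exp (t * I) • y‖ ^ 2 := by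
  obtain ⟨t, ht, hre⟩ := exists_mem_Icc_exp_mul_I_mul_eq_norm (inner ℂ x y)
  refine ⟨t, ht, ?_⟩
  rw [norm_add_sq (𝕜 := ℂ), inner_smul_right, hre, norm_smul, norm_exp_ofReal_mul_I, one_mul]
  simp only [RCLike.re_to_complex, ofReal_re]
  nlinarith [norm_nonneg (inner ℂ x y)]

lemma Finset.exists_mem_Icc_sum_norm_sq_le_norm_sum_exp_smul_sq
    {ι H : Type*} [NormedAddCommGroup H] [InnerProductSpace ℂ H] [DecidableEq ι]
    (v : ι → H) (s : Finset ι) :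
    ∃ θ : ι → ℝ, (∀ j, θ j ∈ Set.Icc 0 (2 * π)) ∧
      ∑ j ∈ s, ‖v j‖ ^ 2 ≤ ‖∑ j ∈ s, exp (θ j * I) • v j‖ ^ 2 := by
  induction s using Finset.induction with
  | empty => exact ⟨0, fun _ => ⟨le_rfl, by positivity⟩, by simp⟩
  | @insert a s ha ih =>
    obtain ⟨θ, hθ, hle⟩ := ih
    obtain ⟨t, ht, hadd⟩ := exists_mem_Icc_norm_sq_add_le_norm_add_exp_smul_sq
      (∑ j ∈ s, exp (θ j * I) • v j) (v a)
    refine ⟨Function.update θ a t, fun j => ?_, ?_⟩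
    · rcases eq_or_ne j a with rfl | hj
      · simpa using ht
      · simpa [Function.update_of_ne hj] using hθ j
    have hrest : ∑ j ∈ s, exp (Function.update θ a t j * I) • v j =
        ∑ j ∈ s, exp (θ j * I) • v j :=
      Finset.sum_congr rfl fun j hj => by rw [Function.update_of_ne (ne_of_mem_of_not_mem hj ha)]
    rw [sum_insert ha, sum_insert ha, hrest, Function.update_self, add_comm, add_comm (_ • _)]
    linarith

theorem amar_lemma_a_general
    {H : Type*} [NormedAddCommGroup H] [InnerProductSpace ℂ H]
    (p : ℕ) (e : Fin p → H) (he : ∀ j, ‖e j‖ = 1) (β : Fin p → ℂ) :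
    ∃ θ : Fin p → ℝ, (∀ j, θ j ∈ Set.Icc (0 : ℝ) (2 * Real.pi)) ∧
      ∑ j, ‖β j‖ ^ 2 ≤
        ‖∑ j, (Complex.exp ((θ j : ℂ) * Complex.I) * β j) • e j‖ ^ 2 := by
  obtain ⟨θ, hθ, hle⟩ :=
    Finset.univ.exists_mem_Icc_sum_norm_sq_le_norm_sum_exp_smul_sq fun j => β j • e j
  refine ⟨θ, hθ, ?_⟩
  simpa only [norm_smul, he, mul_one, smul_smul] using hle

/-- **Lemma 3.5 a) (Amar's lemma).** Given unit vectors `e_1, …, e_p` in a complex inner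
product space and scalars `β_1, …, β_p`, there are phases `θ_j ∈ [0, 2π]` such that
`‖Σ_j e^{iθ_j} β_j e_j‖² ≥ Σ_j |β_j|²`. -/
theorem amar_lemma_a
    {H : Type*} [NormedAddCommGroup H] [InnerProductSpace ℂ H]
    (p : ℕ) (hp : 1 ≤ p) (e : Fin p → H) (he : ∀ j, ‖e j‖ = 1) (β : Fin p → ℂ) :
    ∃ θ : Fin p → ℝ, (∀ j, θ j ∈ Set.Icc (0 : ℝ) (2 * Real.pi)) ∧
      ∑ j, ‖β j‖ ^ 2 ≤
        ‖∑ j, (Complex.exp ((θ j : ℂ) * Complex.I) * β j) • e j‖ ^ 2 :=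
  amar_lemma_a_general p e he β
end

section
/- Let H be a complex inner product space, let p ≥ 1, and let f_1, …, f_p ∈ H. Then there exist θ_1, …, θ_p ∈ [0, 2π] such that ‖ Σ_{j=1}^p e^{iθ_j} f_j ‖² ≥ Σ_{j=1}^p ‖f_j‖². -/
/-! Add the vectors one at a time, choosing each new phase in `{0, π}`, i.e. a sign.
By the parallelogram law `‖g + x‖² + ‖g - x‖² = 2 (‖g‖² + ‖x‖²)`, one of the two signs
gives `‖g ± x‖² ≥ ‖g‖² + ‖x‖²`, so the inequality survives each step. -/

open Complex Finset Real

section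

variable {H : Type*} [NormedAddCommGroup H] [InnerProductSpace ℂ H]

lemma exists_phase_norm_sq_add_le (x g : H) :
    ∃ t ∈ Set.Icc (0 : ℝ) (2 * π), ‖x‖ ^ 2 + ‖g‖ ^ 2 ≤ ‖exp (t * I) • x + g‖ ^ 2 := by
  have parallelogram := parallelogram_law_with_norm ℂ x g
  by_cases hplus : ‖x‖ ^ 2 + ‖g‖ ^ 2 ≤ ‖x + g‖ ^ 2
  · exact ⟨0, ⟨le_rfl, by positivity⟩, by simpa using hplus⟩
  · refine ⟨π, ⟨pi_pos.le, by linarith [pi_pos]⟩, ?_⟩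
    rw [exp_pi_mul_I, neg_one_smul, neg_add_eq_sub, norm_sub_rev]
    linarith

lemma exists_phases_sum_norm_sq_le {ι : Type*} [DecidableEq ι] (f : ι → H) (s : Finset ι) :
    ∃ θ : ι → ℝ, (∀ j, θ j ∈ Set.Icc (0 : ℝ) (2 * π)) ∧
      ∑ j ∈ s, ‖f j‖ ^ 2 ≤ ‖∑ j ∈ s, exp (θ j * I) • f j‖ ^ 2 := by
  induction s using Finset.induction_on with
  | empty => exact ⟨0, fun _ => ⟨le_rfl, by positivity⟩, by simp⟩
  | @insert a s ha ih =>
    obtain ⟨θ, hθ, hle⟩ := ih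
    obtain ⟨t, ht, hstep⟩ := exists_phase_norm_sq_add_le (f a) (∑ j ∈ s, exp (θ j * I) • f j)
    have unchanged : ∑ j ∈ s, exp (Function.update θ a t j * I) • f j
        = ∑ j ∈ s, exp (θ j * I) • f j :=
      sum_congr rfl fun j hj => by rw [Function.update_of_ne (ne_of_mem_of_not_mem hj ha)]
    refine ⟨Function.update θ a t, ?_, ?_⟩
    · intro j
      rcases eq_or_ne j a with rfl | hj
      · simpa using ht
      · simpa [Function.update_of_ne hj] using hθ j
    · rw [sum_insert ha, sum_insert ha, Function.update_self, unchanged]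
      linarith

end

theorem amar_lemma_b_general
    {H : Type*} [NormedAddCommGroup H] [InnerProductSpace ℂ H]
    (p : ℕ) (f : Fin p → H) :
    ∃ θ : Fin p → ℝ, (∀ j, θ j ∈ Set.Icc (0 : ℝ) (2 * Real.pi)) ∧
      ∑ j, ‖f j‖ ^ 2 ≤ ‖∑ j, Complex.exp ((θ j : ℂ) * Complex.I) • f j‖ ^ 2 :=
  exists_phases_sum_norm_sq_le f univ

/-- **Lemma 3.5 b) (Amar's lemma).** Given vectors `f_1, …, f_p` in a complex inner
product space, there are phases `θ_j ∈ [0, 2π]` such that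
`‖Σ_j e^{iθ_j} f_j‖² ≥ Σ_j ‖f_j‖²`. -/
theorem amar_lemma_b
    {H : Type*} [NormedAddCommGroup H] [InnerProductSpace ℂ H]
    (p : ℕ) (hp : 1 ≤ p) (f : Fin p → H) :
    ∃ θ : Fin p → ℝ, (∀ j, θ j ∈ Set.Icc (0 : ℝ) (2 * Real.pi)) ∧
      ∑ j, ‖f j‖ ^ 2 ≤ ‖∑ j, Complex.exp ((θ j : ℂ) * Complex.I) • f j‖ ^ 2 :=
  amar_lemma_b_general p f
end

section
/- Fix s ∈ (0,1). Let m : ℤ → (0,∞) with m(0) = s and m(x) = 1 for x ≠ 0, and let Δ_s be the bounded self-adjoint operator on ℓ²_m(ℤ) given by (Δ_s f)(x) = (1/m(x)) (2 f(x) − f(x−1) − f(x+1)). Then λ_s := 4/(s(2−s)) is an eigenvalue of Δ_s: there exists a nonzero f ∈ ℓ²_m(ℤ) with Δ_s f = λ_s f. -/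
/-!
The eigenfunction is `f x = c ^ |x|` with `c = -s/(2-s) ∈ (-1, 0)`. Away from the origin the
weight is `1` and the eigenvalue equation for a geometric profile is `2 - c - c⁻¹ = λ_s`; at the
origin it reads `(2 - 2c)/s = λ_s`. Both hold for this `c`, and `|c| < 1` puts `f` in `ℓ²_m`.
-/

open MeasureTheory

/-- The weighted counting measure `μ {x} = m x` on a discrete space,
realising `ℓ²_m(V)` as `Lp ℂ 2 (wMeasure m)`. -/
noncomputable def wMeasure {V : Type} [MeasurableSpace V] (m : V → ℝ) : Measure V :=
  Measure.sum fun x => (m x).toNNReal • Measure.dirac x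

/-- The vertex weight on `ℤ` equal to `s` at `0` and `1` elsewhere. -/
noncomputable def mW (s : ℝ) : ℤ → ℝ := fun x => if x = 0 then s else 1

section WeightedCounting

variable {V : Type} [MeasurableSpace V] [MeasurableSingletonClass V] {m : V → ℝ}

theorem lintegral_wMeasure (h : V → ENNReal) :
    ∫⁻ x, h x ∂(wMeasure m) = ∑' x, (m x).toNNReal * h x := by
  simp only [wMeasure, lintegral_sum_measure, lintegral_smul_measure, lintegral_dirac,
    ENNReal.smul_def, smul_eq_mul]

theorem wMeasure_singleton_pos {x : V} (hx : 0 < m x) : 0 < wMeasure m {x} := by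
  rw [wMeasure, Measure.sum_apply _ (measurableSet_singleton x)]
  refine lt_of_lt_of_le ?_ (ENNReal.le_tsum x)
  simpa using hx

theorem ae_wMeasure_iff (hm : ∀ x, 0 < m x) {p : V → Prop} :
    (∀ᵐ x ∂(wMeasure m), p x) ↔ ∀ x, p x := by
  refine ⟨fun h x => ?_, Filter.Eventually.of_forall⟩
  by_contra hx
  have hnull : wMeasure m {x} = 0 :=
    measure_mono_null (Set.singleton_subset_iff.2 hx) (ae_iff.1 h)
  exact (wMeasure_singleton_pos (hm x)).ne' hnull

theorem memLp_two_wMeasure_of_summable [Countable V] {E : Type*} [NormedAddCommGroup E]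
    {f : V → E} (hm : ∀ x, 0 ≤ m x) (hf : Summable fun x => m x * ‖f x‖ ^ 2) :
    MemLp f 2 (wMeasure m) := by
  refine ⟨.of_discrete, ?_⟩
  rw [eLpNorm_lt_top_iff_lintegral_rpow_enorm_lt_top two_ne_zero ENNReal.ofNat_ne_top,
    lintegral_wMeasure]
  have hterm : ∀ x, ((m x).toNNReal : ENNReal) * ‖f x‖ₑ ^ (2 : ENNReal).toReal
      = ENNReal.ofReal (m x * ‖f x‖ ^ 2) := fun x => by
    rw [ENNReal.ofReal_mul (hm x), ENNReal.ofReal_pow (norm_nonneg _), ofReal_norm,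
      ENNReal.toReal_ofNat, ENNReal.rpow_two]
    rfl
  simp only [hterm]
  rw [← ENNReal.ofReal_tsum_of_nonneg (fun x => by have := hm x; positivity) hf]
  exact ENNReal.ofReal_lt_top

end WeightedCounting

theorem summable_pow_natAbs {r : ℝ} (h0 : 0 ≤ r) (h1 : r < 1) :
    Summable fun x : ℤ => r ^ x.natAbs := by
  apply Summable.of_nat_of_neg <;>
  · simpa only [Int.natAbs_natCast, Int.natAbs_neg] using summable_geometric_of_lt_one h0 h1

theorem second_difference_pow_natAbs {R : Type*} [CommRing R] (c : R) {x : ℤ} (hx : x ≠ 0) :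
    2 * c ^ x.natAbs - c ^ (x - 1).natAbs - c ^ (x + 1).natAbs
      = (2 * c - 1 - c ^ 2) * c ^ (x.natAbs - 1) := by
  obtain ⟨n, rfl | rfl⟩ : ∃ n : ℕ, x = n + 1 ∨ x = -(n + 1) :=
    ⟨x.natAbs - 1, by omega⟩
  · rw [show ((n : ℤ) + 1).natAbs = n + 1 by omega, show ((n : ℤ) + 1 - 1).natAbs = n by omega,
      show ((n : ℤ) + 1 + 1).natAbs = n + 2 by omega, Nat.add_sub_cancel]
    ring
  · rw [show (-((n : ℤ) + 1)).natAbs = n + 1 by omega,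
      show (-((n : ℤ) + 1) - 1).natAbs = n + 2 by omega,
      show (-((n : ℤ) + 1) + 1).natAbs = n by omega, Nat.add_sub_cancel]
    ring

theorem mW_pos {s : ℝ} (hs : 0 < s) (x : ℤ) : 0 < mW s x := by
  unfold mW; split_ifs <;> first | exact hs | exact one_pos

theorem mW_le_one {s : ℝ} (hs : s ≤ 1) (x : ℤ) : mW s x ≤ 1 := by
  unfold mW; split_ifs <;> first | exact hs | exact le_rfl

noncomputable def mWEigenfunction (s : ℝ) : ℤ → ℂ :=
  fun x => ((-(s / (2 - s)) : ℝ) : ℂ) ^ x.natAbs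

theorem memLp_mWEigenfunction {s : ℝ} (hs : s ∈ Set.Ioo (0 : ℝ) 1) :
    MemLp (mWEigenfunction s) 2 (wMeasure (mW s)) := by
  set a : ℝ := s / (2 - s)
  have ha0 : 0 ≤ a := div_nonneg hs.1.le (by linarith [hs.2])
  have ha1 : a < 1 := (div_lt_one (by linarith [hs.2])).2 (by linarith [hs.2])
  refine memLp_two_wMeasure_of_summable (fun x => (mW_pos hs.1 x).le) ?_
  refine (summable_pow_natAbs (sq_nonneg a) (by nlinarith)).of_nonneg_of_le
    (fun x => mul_nonneg (mW_pos hs.1 x).le (sq_nonneg _)) fun x => ?_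
  rw [mWEigenfunction, norm_pow, Complex.norm_real, norm_neg, Real.norm_of_nonneg ha0,
    ← pow_mul, ← pow_mul, mul_comm x.natAbs 2]
  exact mul_le_of_le_one_left (by positivity) (mW_le_one hs.2.le x)

theorem mW_inv_mul_second_difference_mWEigenfunction {s : ℝ} (hs : s ∈ Set.Ioo (0 : ℝ) 1)
    (x : ℤ) :
    (mW s x : ℂ)⁻¹ * (2 * mWEigenfunction s x - mWEigenfunction s (x - 1)
      - mWEigenfunction s (x + 1)) = ((4 / (s * (2 - s)) : ℝ) : ℂ) * mWEigenfunction s x := by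
  set c : ℂ := ((-(s / (2 - s)) : ℝ) : ℂ)
  have hs0 : (s : ℂ) ≠ 0 := by exact_mod_cast hs.1.ne'
  have h2s : (2 - s : ℂ) ≠ 0 := by exact_mod_cast (by linarith [hs.2] : (2 - s : ℝ) ≠ 0)
  simp only [mWEigenfunction]
  by_cases hx : x = 0
  · subst hx
    simp only [mW]
    norm_num
    field_simp
    ring
  · have hroot : 2 * c - 1 - c ^ 2 = ((4 / (s * (2 - s)) : ℝ) : ℂ) * c := by
      simp only [c]
      push_cast
      field_simp
      ring
    rw [second_difference_pow_natAbs c hx, show mW s x = 1 from if_neg hx, hroot,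
      Complex.ofReal_one, inv_one, one_mul, mul_assoc, ← pow_succ',
      Nat.sub_add_cancel (Int.natAbs_pos.2 hx)]

theorem eigenvalue_weighted_Z_laplacian_general
    (s : ℝ) (hs : s ∈ Set.Ioo (0 : ℝ) 1)
    (T : Lp ℂ 2 (wMeasure (mW s)) →L[ℂ] Lp ℂ 2 (wMeasure (mW s)))
    (hT : ∀ f : Lp ℂ 2 (wMeasure (mW s)),
      (T f : ℤ → ℂ) =ᵐ[wMeasure (mW s)]
        fun x => ((mW s x : ℂ))⁻¹ * (2 * f x - f (x - 1) - f (x + 1))) :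
    ∃ f : Lp ℂ 2 (wMeasure (mW s)), f ≠ 0 ∧
      T f = ((4 / (s * (2 - s)) : ℝ) : ℂ) • f := by
  have hφ := memLp_mWEigenfunction hs
  have hpos : ∀ x, 0 < mW s x := mW_pos hs.1
  have hφ_apply : ∀ x, hφ.toLp _ x = mWEigenfunction s x :=
    (ae_wMeasure_iff hpos).1 hφ.coeFn_toLp
  refine ⟨hφ.toLp _, fun h0 => ?_, Lp.ext ?_⟩
  · have hzero : ∀ x, hφ.toLp _ x = 0 :=
      (ae_wMeasure_iff hpos).1 (by rw [h0]; exact Lp.coeFn_zero ℂ 2 (wMeasure (mW s)))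
    simpa [mWEigenfunction] using (hφ_apply 0).symm.trans (hzero 0)
  · refine (hT _).trans (Filter.EventuallyEq.trans ?_ (Lp.coeFn_smul _ _).symm)
    refine Filter.Eventually.of_forall fun x => ?_
    simpa only [hφ_apply, Pi.smul_apply, smul_eq_mul] using
      mW_inv_mul_second_difference_mWEigenfunction hs x

/-- `λ_s = 4/(s(2-s))` is an eigenvalue of the Laplacian `Δ_s` of `ℤ` with unit edge
weights and vertex weight `s` at `0`, `1` elsewhere. -/
theorem eigenvalue_weighted_Z_laplacian
    (s : ℝ) (hs : s ∈ Set.Ioo (0 : ℝ) 1)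
    (T : Lp ℂ 2 (wMeasure (mW s)) →L[ℂ] Lp ℂ 2 (wMeasure (mW s)))
    (hsa : IsSelfAdjoint T)
    (hT : ∀ f : Lp ℂ 2 (wMeasure (mW s)),
      (T f : ℤ → ℂ) =ᵐ[wMeasure (mW s)]
        fun x => ((mW s x : ℂ))⁻¹ * (2 * f x - f (x - 1) - f (x + 1))) :
    ∃ f : Lp ℂ 2 (wMeasure (mW s)), f ≠ 0 ∧
      T f = ((4 / (s * (2 - s)) : ℝ) : ℂ) • f :=
  eigenvalue_weighted_Z_laplacian_general s hs T hT
end
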